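/- Let H be a real Hilbert space, T > 0, let g : ℝ → ℝ be continuous with g(t) ≥ 0 for all t ∈ [0,T], and let x : ℝ → H be differentiable on [0,T] with ⟪x'(t), x(t)⟫ = g(t) (‖x(t)‖² − 1) for every t ∈ [0,T]. If ‖x(0)‖ ≤ 1, then ‖x(t)‖ ≤ 1 for all t ∈ [0,T]. -/

import Mathlib

open RealInnerProductSpace Real Set

/-! The quantity `y = ‖x‖² − 1` solves the scalar linear equation `y' = 2 g y`, so
`y(t) = y(0) · exp (2 ∫₀ᵗ g)` has the sign of `y(0)`: the unit ball is invariant. -/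

theorem eq_mul_exp_integral_of_hasDerivAt {a y : ℝ → ℝ} (ha : Continuous a) {t₀ T : ℝ}
    (hy : ∀ t ∈ Icc t₀ T, HasDerivAt y (a t * y t) t) :
    ∀ t ∈ Icc t₀ T, y t = y t₀ * exp (∫ s in t₀..t, a s) := by
  set A : ℝ → ℝ := fun t => ∫ s in t₀..t, a s
  have hA : ∀ t, HasDerivAt A (a t) t := fun t =>
    intervalIntegral.integral_hasDerivAt_right (ha.intervalIntegrable t₀ t)
      (ha.stronglyMeasurableAtFilter _ _) ha.continuousAt
  have hz : ∀ t ∈ Icc t₀ T, HasDerivAt (fun s => y s * exp (-A s)) 0 t := by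
    intro t ht
    refine ((hy t ht).mul (hA t).neg.exp).congr_deriv ?_
    ring
  have hconst := constant_of_has_deriv_right_zero
    (fun t ht => (hz t ht).continuousAt.continuousWithinAt)
    (fun t ht => (hz t (Ico_subset_Icc_self ht)).hasDerivWithinAt)
  intro t ht
  have hzt : y t * exp (-A t) = y t₀ := by simpa [A] using hconst t ht
  rw [← hzt, mul_assoc, ← exp_add, neg_add_cancel, exp_zero, mul_one]

theorem nonpos_of_hasDerivAt_mul_self {a y : ℝ → ℝ} (ha : Continuous a) {t₀ T : ℝ}
    (hy : ∀ t ∈ Icc t₀ T, HasDerivAt y (a t * y t) t) (hy₀ : y t₀ ≤ 0) :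
    ∀ t ∈ Icc t₀ T, y t ≤ 0 := fun t ht => by
  rw [eq_mul_exp_integral_of_hasDerivAt ha hy t ht]
  exact mul_nonpos_of_nonpos_of_nonneg hy₀ (exp_pos _).le

theorem stmt_2_general {H : Type*} [NormedAddCommGroup H] [InnerProductSpace ℝ H]
    (T : ℝ) (g : ℝ → ℝ) (hg : Continuous g)
    (x : ℝ → H) (x' : ℝ → H)
    (hx : ∀ t ∈ Set.Icc (0 : ℝ) T, HasDerivAt x (x' t) t)
    (hinner : ∀ t ∈ Set.Icc (0 : ℝ) T, ⟪x' t, x t⟫ = g t * (‖x t‖ ^ 2 - 1))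
    (h0 : ‖x 0‖ ≤ 1) :
    ∀ t ∈ Set.Icc (0 : ℝ) T, ‖x t‖ ≤ 1 := by
  have hy : ∀ t ∈ Icc (0 : ℝ) T,
      HasDerivAt (fun s => ‖x s‖ ^ 2 - 1) (2 * g t * (‖x t‖ ^ 2 - 1)) t := by
    intro t ht
    refine ((hx t ht).norm_sq.sub_const 1).congr_deriv ?_
    rw [real_inner_comm, hinner t ht, mul_assoc]
  have hy₀ : ‖x 0‖ ^ 2 - 1 ≤ 0 := by
    nlinarith [norm_nonneg (x 0)]
  intro t ht
  have hyt := nonpos_of_hasDerivAt_mul_self (hg.const_mul 2) hy hy₀ t ht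
  exact (sq_le_one_iff₀ (norm_nonneg _)).mp (by linarith)

/-- Abstract form of Lemma 3.1: if `⟪x'(t), x(t)⟫ = g(t)(‖x(t)‖² − 1)` on `[0,T]`
with `g ≥ 0` continuous and `‖x(0)‖ ≤ 1`, then `‖x(t)‖ ≤ 1` on `[0,T]`. -/
theorem stmt_2 {H : Type*} [NormedAddCommGroup H] [InnerProductSpace ℝ H]
    (T : ℝ) (hT : 0 < T) (g : ℝ → ℝ) (hg : Continuous g)
    (hg0 : ∀ t ∈ Set.Icc (0 : ℝ) T, 0 ≤ g t)
    (x : ℝ → H) (x' : ℝ → H)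
    (hx : ∀ t ∈ Set.Icc (0 : ℝ) T, HasDerivAt x (x' t) t)
    (hinner : ∀ t ∈ Set.Icc (0 : ℝ) T, ⟪x' t, x t⟫ = g t * (‖x t‖ ^ 2 - 1))
    (h0 : ‖x 0‖ ≤ 1) :
    ∀ t ∈ Set.Icc (0 : ℝ) T, ‖x t‖ ≤ 1 :=
  stmt_2_general T g hg x x' hx hinner h0
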